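/- Let R > 0 and V ∈ L^∞(ℝ;ℝ) satisfy ∫_{−R}^R V(x) dx < 0 and V(x) ≤ 0 for almost every x outside [−R,R]. For β > 0 define μ₁(β) = inf_{u ∈ H¹(ℝ), u ≠ 0} ⟨Vu,u⟩_{L²} / (‖u′‖²_{L²} + β‖u‖²_{L²}). Then μ₁(0₊) = −∞, i.e. for every M > 0 there exists β > 0 with μ₁(β) < −M (equivalently, inf_{β>0} μ₁(β) = −∞). -/

import Mathlib

open MeasureTheory Filter Set
open scoped ENNReal Topology

noncomputable section

/-- `g` is the weak derivative of `f : ℝ → ℂ`. -/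
def HasWeakDeriv (f g : ℝ → ℂ) : Prop :=
  ∀ χ : ℝ → ℂ, ContDiff ℝ (⊤ : ℕ∞) χ → HasCompactSupport χ →
    ∫ x : ℝ, f x * deriv χ x = - ∫ x : ℝ, g x * χ x

/-- `f ∈ H¹(ℝ;ℂ)` with weak derivative `f'`. -/
def MemH1 (f f' : ℝ → ℂ) : Prop :=
  MemLp f 2 (volume : Measure ℝ) ∧ MemLp f' 2 (volume : Measure ℝ) ∧ HasWeakDeriv f f'

/-- The Rayleigh-type quotient `⟨Vu,u⟩_{L²} / (‖u'‖_{L²}² + β‖u‖_{L²}²)`. -/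
def rayleigh (V : ℝ → ℝ) (β : ℝ) (u u' : ℝ → ℂ) : ℝ :=
  (∫ x : ℝ, V x * ‖u x‖ ^ 2) /
    ((eLpNorm u' 2 (volume : Measure ℝ)).toReal ^ 2 +
      β * (eLpNorm u 2 (volume : Measure ℝ)).toReal ^ 2)

/-- `μ₁(β) = inf_{u ∈ H¹(ℝ), u ≠ 0} ⟨Vu,u⟩/(‖u'‖² + β‖u‖²)`. -/
def muOne (V : ℝ → ℝ) (β : ℝ) : ℝ :=
  sInf { r : ℝ | ∃ u u' : ℝ → ℂ, MemH1 u u' ∧ ¬ u =ᵐ[volume] (0 : ℝ → ℂ) ∧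
    r = rayleigh V β u u' }

/-! ### Auxiliary lemmas -/

lemma mul_exp_neg_le_half' (t : ℝ) (ht : 0 ≤ t) : t * Real.exp (-t) ≤ 1/2 := by
  have h2 : 2 * t ≤ Real.exp t := by
    have h := Real.add_one_le_exp (t/2)
    have he : Real.exp t = Real.exp (t/2) * Real.exp (t/2) := by
      rw [← Real.exp_add]; ring_nf
    nlinarith [sq_nonneg (t/2 - 1), Real.exp_pos (t/2)]
  have he : 0 < Real.exp t := Real.exp_pos t
  rw [Real.exp_neg]
  nlinarith [mul_le_mul_of_nonneg_right h2 (inv_nonneg.2 he.le),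
    mul_inv_cancel₀ he.ne']

lemma sq_toReal_eLpNorm_two {f : ℝ → ℂ} (hf : MemLp f 2 (volume : Measure ℝ)) :
    (eLpNorm f 2 (volume : Measure ℝ)).toReal ^ 2 = ∫ x : ℝ, ‖f x‖ ^ 2 := by
  rw [hf.eLpNorm_eq_integral_rpow_norm two_ne_zero ENNReal.ofNat_ne_top,
    ENNReal.toReal_ofReal (by positivity)]
  have h2 : (2 : ℝ≥0∞).toReal = 2 := by simp
  rw [h2]
  have hnn : 0 ≤ ∫ a : ℝ, ‖f a‖ ^ (2:ℝ) := integral_nonneg fun x => by positivity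
  rw [← Real.rpow_natCast ((∫ a : ℝ, ‖f a‖ ^ (2:ℝ)) ^ (2⁻¹:ℝ)) 2, ← Real.rpow_mul hnn]
  norm_num

lemma weak_deriv_of_contDiff {u : ℝ → ℂ} (hu : ContDiff ℝ 1 u)
    (χ : ℝ → ℂ) (hχ : ContDiff ℝ (⊤ : ℕ∞) χ) (hχ2 : HasCompactSupport χ) :
    ∫ x : ℝ, u x * deriv χ x = - ∫ x : ℝ, deriv u x * χ x := by
  set g : ℝ → ℂ := fun x => u x * χ x with hgdef
  have hg : ContDiff ℝ 1 g := hu.mul (hχ.of_le (by simp))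
  have hg2 : HasCompactSupport g := hχ2.mul_left
  have hderiv : ∀ x, deriv g x = deriv u x * χ x + u x * deriv χ x := fun x =>
    ((hu.differentiable one_ne_zero x).hasDerivAt.mul
      ((hχ.differentiable (by simp) x).hasDerivAt)).deriv
  have hint : Integrable (deriv g) :=
    (hg.continuous_deriv le_rfl).integrable_of_hasCompactSupport hg2.deriv
  have h0 : ∫ x : ℝ, deriv g x = 0 := by
    rw [← intervalIntegral.integral_Iic_add_Ioi (b := 0) hint.integrableOn hint.integrableOn,
      hg2.integral_Iic_deriv_eq hg 0, hg2.integral_Ioi_deriv_eq hg 0]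
    ring
  have i1 : Integrable (fun x => deriv u x * χ x) :=
    ((hu.continuous_deriv le_rfl).mul hχ.continuous).integrable_of_hasCompactSupport
      hχ2.mul_left
  have i2 : Integrable (fun x => u x * deriv χ x) :=
    (hu.continuous.mul ((hχ.of_le (by simp) : ContDiff ℝ 1 χ).continuous_deriv le_rfl)).integrable_of_hasCompactSupport
      hχ2.deriv.mul_left
  have hsum : (∫ x : ℝ, deriv u x * χ x) + ∫ x : ℝ, u x * deriv χ x = 0 := by
    rw [← integral_add i1 i2, ← h0]
    exact integral_congr_ae (Filter.Eventually.of_forall fun x => (hderiv x).symm)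
  linear_combination hsum

lemma integral_sq_norm_pos {u : ℝ → ℂ} (hu : MemLp u 2 (volume : Measure ℝ))
    (hne : ¬ u =ᵐ[(volume : Measure ℝ)] (0 : ℝ → ℂ)) : 0 < ∫ x : ℝ, ‖u x‖ ^ 2 := by
  have hi : Integrable (fun x => ‖u x‖ ^ 2) :=
    (memLp_two_iff_integrable_sq_norm hu.aestronglyMeasurable).1 hu
  rcases lt_or_eq_of_le (integral_nonneg (f := fun x => ‖u x‖ ^ 2) (fun x => by positivity :
      ∀ x : ℝ, 0 ≤ ‖u x‖ ^ 2)) with h | h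
  · exact h
  · exfalso
    apply hne
    have := (integral_eq_zero_iff_of_nonneg (fun x => by positivity) hi).1 h.symm
    filter_upwards [this] with x hx
    have h1 : ‖u x‖ = 0 := by
      have h2 : ‖u x‖ ^ 2 = 0 := hx
      nlinarith [norm_nonneg (u x)]
    simpa [norm_eq_zero] using h1

lemma integrable_V_mul_sq {V : ℝ → ℝ} (hVm : AEStronglyMeasurable V (volume : Measure ℝ))
    {C : ℝ} (hC : ∀ᵐ x ∂(volume : Measure ℝ), |V x| ≤ C)
    {u : ℝ → ℂ} (hu : MemLp u 2 (volume : Measure ℝ)) :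
    Integrable (fun x => V x * ‖u x‖ ^ 2) (volume : Measure ℝ) := by
  have hi : Integrable (fun x => ‖u x‖ ^ 2) :=
    (memLp_two_iff_integrable_sq_norm hu.aestronglyMeasurable).1 hu
  have hn : AEStronglyMeasurable (fun x => ‖u x‖ ^ 2) (volume : Measure ℝ) :=
    (hu.aestronglyMeasurable.norm.aemeasurable.pow_const 2).aestronglyMeasurable
  refine (hi.const_mul C).mono' (hVm.mul hn) ?_
  filter_upwards [hC] with x hx
  have h0 : (0:ℝ) ≤ ‖u x‖ ^ 2 := by positivity
  rw [Real.norm_eq_abs, abs_mul, abs_of_nonneg h0]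
  exact mul_le_mul_of_nonneg_right hx h0

/-! ### The Gaussian test functions -/

def gA (a : ℝ) : ℝ → ℂ := fun x => ((Real.exp (-a * x^2) : ℝ) : ℂ)
def gA' (a : ℝ) : ℝ → ℂ :=
  fun x => ((Real.exp (-a * x^2) * (-a * (2*x)) : ℝ) : ℂ)

lemma gA_hasDerivAt (a x : ℝ) :
    HasDerivAt (fun y : ℝ => Real.exp (-a * y^2)) (Real.exp (-a * x^2) * (-a * (2*x))) x := by
  have h : HasDerivAt (fun y : ℝ => -a * y^2) (-a * (2*x)) x := by
    have := (hasDerivAt_pow 2 x).const_mul (-a)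
    simpa using this
  exact h.exp

lemma gA_hasDerivAt' (a x : ℝ) : HasDerivAt (gA a) (gA' a x) x :=
  (gA_hasDerivAt a x).ofReal_comp

lemma gA_contDiff (a : ℝ) : ContDiff ℝ 1 (gA a) := by
  have h1 : ContDiff ℝ 1 (fun y : ℝ => -a * y^2) := contDiff_const.mul (contDiff_id.pow 2)
  have h2 : ContDiff ℝ 1 (fun y : ℝ => Real.exp (-a * y^2)) := Real.contDiff_exp.comp h1
  exact Complex.ofRealCLM.contDiff.comp h2

lemma gA_deriv (a : ℝ) : deriv (gA a) = gA' a := funext fun x => (gA_hasDerivAt' a x).deriv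

lemma norm_gA_sq (a x : ℝ) : ‖gA a x‖^2 = Real.exp (-(2*a) * x^2) := by
  rw [gA, Complex.norm_real, Real.norm_eq_abs, sq_abs, sq, ← Real.exp_add]
  ring_nf

lemma gA'_cont (a : ℝ) : Continuous (gA' a) := by
  apply Complex.continuous_ofReal.comp
  exact (Real.continuous_exp.comp (by continuity)).mul (by continuity)

lemma norm_gA'_sq_le (a : ℝ) (ha : 0 < a) (x : ℝ) :
    ‖gA' a x‖^2 ≤ 2*a*Real.exp (-a * x^2) := by
  rw [gA', Complex.norm_real, Real.norm_eq_abs, sq_abs]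
  set E := Real.exp (-a * x^2) with hE
  have hEnn : 0 ≤ E := Real.exp_nonneg _
  have h1 : (a * x^2) * E ≤ 1/2 := by
    have hE2 : E = Real.exp (-(a * x^2)) := by rw [hE]; ring_nf
    rw [hE2]
    exact mul_exp_neg_le_half' _ (by positivity)
  calc (E * (-a * (2*x)))^2 = (4*a) * (((a*x^2) * E) * E) := by ring
    _ ≤ (4*a) * ((1/2) * E) := by
        apply mul_le_mul_of_nonneg_left (mul_le_mul_of_nonneg_right h1 hEnn) (by positivity)
    _ = 2*a*E := by ring

lemma gA_memLp (a : ℝ) (ha : 0 < a) : MemLp (gA a) 2 (volume : Measure ℝ) := by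
  rw [memLp_two_iff_integrable_sq_norm ((gA_contDiff a).continuous.aestronglyMeasurable)]
  simp_rw [norm_gA_sq]
  exact integrable_exp_neg_mul_sq (by linarith)

lemma gA'_memLp (a : ℝ) (ha : 0 < a) : MemLp (gA' a) 2 (volume : Measure ℝ) := by
  rw [memLp_two_iff_integrable_sq_norm (gA'_cont a).aestronglyMeasurable]
  refine ((integrable_exp_neg_mul_sq ha).const_mul (2*a)).mono'
    (((gA'_cont a).norm.pow 2).aestronglyMeasurable) ?_
  refine Filter.Eventually.of_forall fun x => ?_
  rw [Real.norm_eq_abs, abs_of_nonneg (by positivity)]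
  exact norm_gA'_sq_le a ha x

lemma int_norm_gA_sq (a : ℝ) (ha : 0 < a) :
    ∫ x : ℝ, ‖gA a x‖^2 = Real.sqrt (Real.pi/(2*a)) := by
  simp_rw [norm_gA_sq]
  exact integral_gaussian (2*a)

lemma int_norm_gA'_sq_le (a : ℝ) (ha : 0 < a) :
    ∫ x : ℝ, ‖gA' a x‖^2 ≤ 2*a*Real.sqrt (Real.pi/a) := by
  have hi : Integrable (fun x => ‖gA' a x‖^2) :=
    (memLp_two_iff_integrable_sq_norm (gA'_cont a).aestronglyMeasurable).1 (gA'_memLp a ha)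
  calc ∫ x : ℝ, ‖gA' a x‖^2 ≤ ∫ x : ℝ, 2*a*Real.exp (-a * x^2) :=
        integral_mono hi ((integrable_exp_neg_mul_sq ha).const_mul (2*a))
          (fun x => norm_gA'_sq_le a ha x)
    _ = 2*a*Real.sqrt (Real.pi/a) := by
        rw [MeasureTheory.integral_const_mul, integral_gaussian]

set_option maxHeartbeats 1000000 in
/-- If `∫_{-R}^R V < 0` and `V ≤ 0` a.e. outside `[-R,R]`, then `μ₁(0₊) = -∞`:
for every `M > 0` there is `β > 0` with `μ₁(β) < -M`. -/
theorem muOne_tendsto_neg_infty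
    (R : ℝ) (hR : 0 < R)
    (V : ℝ → ℝ) (hV : MemLp V ⊤ (volume : Measure ℝ))
    (hint : (∫ x in (-R)..R, V x) < 0)
    (hout : ∀ᵐ x ∂(volume : Measure ℝ), x ∉ Set.Icc (-R) R → V x ≤ 0) :
    ∀ M : ℝ, 0 < M → ∃ β : ℝ, 0 < β ∧ muOne V β < -M := by
  intro M hM
  set c : ℝ := -(∫ x in (-R)..R, V x) with hcdef
  have hc : 0 < c := by simp [hcdef]; linarith
  set C : ℝ := (eLpNorm V ⊤ (volume : Measure ℝ)).toReal with hCdef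
  have hC0 : 0 ≤ C := ENNReal.toReal_nonneg
  have hVm : AEStronglyMeasurable V (volume : Measure ℝ) := hV.aestronglyMeasurable
  have hfin : eLpNormEssSup V (volume : Measure ℝ) ≠ ⊤ := by
    rw [← eLpNorm_exponent_top]; exact hV.2.ne
  have hCae : ∀ᵐ x ∂(volume : Measure ℝ), |V x| ≤ C := by
    filter_upwards [ae_le_eLpNormEssSup (f := V) (μ := (volume : Measure ℝ))] with x hx
    have h1 : ((‖V x‖₊ : ℝ≥0∞)).toReal ≤ C := by
      rw [hCdef, eLpNorm_exponent_top]
      exact ENNReal.toReal_mono hfin hx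
    simpa [Real.norm_eq_abs] using h1
  -- choice of the Gaussian parameter
  set a : ℝ := min (c / (8*R^3*(C+1))) ((c/(8*M))^2/(4*Real.pi)) with hadef
  have ha : 0 < a := by
    apply lt_min
    · positivity
    · positivity
  have ha1 : a ≤ c / (8*R^3*(C+1)) := min_le_left _ _
  have ha2 : a ≤ (c/(8*M))^2/(4*Real.pi) := min_le_right _ _
  set u : ℝ → ℂ := gA a
  set u' : ℝ → ℂ := gA' a
  have huL : MemLp u 2 (volume : Measure ℝ) := gA_memLp a ha
  have hu'L : MemLp u' 2 (volume : Measure ℝ) := gA'_memLp a ha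
  have hmemH1 : MemH1 u u' := by
    refine ⟨huL, hu'L, fun χ hχ hχ2 => ?_⟩
    have h := weak_deriv_of_contDiff (gA_contDiff a) χ hχ hχ2
    rwa [gA_deriv] at h
  set Ju : ℝ := ∫ x : ℝ, ‖u x‖^2 with hJudef
  have hJu : Ju = Real.sqrt (Real.pi/(2*a)) := int_norm_gA_sq a ha
  have hJupos : 0 < Ju := by
    rw [hJu]; exact Real.sqrt_pos.2 (by positivity)
  have hne : ¬ u =ᵐ[(volume : Measure ℝ)] (0 : ℝ → ℂ) := by
    intro h
    have h2 : (fun x : ℝ => ‖u x‖^2) =ᵐ[(volume : Measure ℝ)] (fun _ => (0:ℝ)) := by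
      filter_upwards [h] with x hx
      simp [hx]
    have : Ju = 0 := by
      rw [hJudef, integral_congr_ae h2, integral_zero]
    linarith
  have hequ : (eLpNorm u 2 (volume : Measure ℝ)).toReal ^ 2 = Ju := sq_toReal_eLpNorm_two huL
  set Ku : ℝ := ∫ x : ℝ, ‖u' x‖^2 with hKudef
  have hequ' : (eLpNorm u' 2 (volume : Measure ℝ)).toReal ^ 2 = Ku := sq_toReal_eLpNorm_two hu'L
  have hKu0 : 0 ≤ Ku := integral_nonneg fun x => by positivity
  -- bound on the derivative term : Ku ≤ c/(8M)
  have hKle : Ku ≤ c/(8*M) := by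
    have h1 : Ku ≤ 2*a*Real.sqrt (Real.pi/a) := int_norm_gA'_sq_le a ha
    set s : ℝ := Real.sqrt (Real.pi/a) with hsdef
    have hs0 : 0 ≤ s := Real.sqrt_nonneg _
    have hss : a * s^2 = Real.pi := by
      rw [hsdef, Real.sq_sqrt (by positivity : (0:ℝ) ≤ Real.pi/a)]
      field_simp
    set d : ℝ := c/(8*M) with hddef
    have hd : 0 < d := by positivity
    have h4 : a*(4*Real.pi) ≤ d^2 := (le_div_iff₀ (by positivity)).1 ha2
    have h5 : 2*a*s ≤ d := by
      by_contra hcon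
      push_neg at hcon
      nlinarith [hss, h4, hd, hs0, ha]
    linarith
  -- numerator bound : N ≤ -c/2
  set N : ℝ := ∫ x : ℝ, V x * ‖u x‖^2 with hNdef
  have hNint : Integrable (fun x => V x * ‖u x‖^2) (volume : Measure ℝ) :=
    integrable_V_mul_sq hVm hCae huL
  have hVIcc : IntegrableOn V (Icc (-R) R) (volume : Measure ℝ) := by
    have hconst : IntegrableOn (fun _ : ℝ => C) (Icc (-R) R) (volume : Measure ℝ) :=
      integrableOn_const measure_Icc_lt_top.ne
    refine hconst.mono' hVm.restrict ?_
    exact ae_restrict_of_ae (hCae.mono fun x hx => by rwa [Real.norm_eq_abs])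
  have hIccV : ∫ x in Icc (-R) R, V x = -c := by
    rw [hcdef, neg_neg, intervalIntegral.integral_of_le (by linarith : -R ≤ R),
      integral_Icc_eq_integral_Ioc]
  have hsplit : (∫ x in Icc (-R) R, V x * ‖u x‖^2) +
      (∫ x in (Icc (-R) R)ᶜ, V x * ‖u x‖^2) = N :=
    integral_add_compl measurableSet_Icc hNint
  have houtle : (∫ x in (Icc (-R) R)ᶜ, V x * ‖u x‖^2) ≤ 0 := by
    apply setIntegral_nonpos_ae measurableSet_Icc.compl
    filter_upwards [hout] with x hx hmemc
    exact mul_nonpos_iff.2 (Or.inr ⟨hx hmemc, by positivity⟩)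
  have hdiff : (∫ x in Icc (-R) R, V x * ‖u x‖^2) - (∫ x in Icc (-R) R, V x)
      = ∫ x in Icc (-R) R, V x * (‖u x‖^2 - 1) := by
    rw [← integral_sub hNint.integrableOn hVIcc]
    exact integral_congr_ae (Filter.Eventually.of_forall fun x => by ring)
  have hbound : |∫ x in Icc (-R) R, V x * (‖u x‖^2 - 1)| ≤ (2*R) * (C * (2*a*R^2)) := by
    have hb : ∀ᵐ x ∂(volume : Measure ℝ).restrict (Icc (-R) R),
        ‖V x * (‖u x‖^2 - 1)‖ ≤ C * (2*a*R^2) := by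
      filter_upwards [ae_restrict_of_ae hCae, ae_restrict_mem measurableSet_Icc] with x hx hxs
      have hx2 : x^2 ≤ R^2 := by nlinarith [hxs.1, hxs.2]
      have hgau : ‖u x‖^2 = Real.exp (-(2*a) * x^2) := norm_gA_sq a x
      have hle1 : Real.exp (-(2*a) * x^2) ≤ 1 := Real.exp_le_one_iff.2 (by nlinarith)
      have hge : 1 - Real.exp (-(2*a) * x^2) ≤ 2*a*x^2 := by
        nlinarith [Real.add_one_le_exp (-(2*a) * x^2)]
      have habs : |‖u x‖^2 - 1| ≤ 2*a*R^2 := by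
        rw [hgau, abs_sub_comm, abs_of_nonneg (by linarith)]
        nlinarith
      rw [Real.norm_eq_abs, abs_mul]
      exact mul_le_mul hx habs (abs_nonneg _) hC0
    have h := norm_integral_le_of_norm_le
      (by exact (integrable_const _ : Integrable (fun _ : ℝ => C * (2*a*R^2))
        (((volume : Measure ℝ)).restrict (Icc (-R) R)))) hb
    rw [Real.norm_eq_abs] at h
    calc |∫ x in Icc (-R) R, V x * (‖u x‖^2 - 1)|
        ≤ ∫ _x in Icc (-R) R, C * (2*a*R^2) := h
      _ = (2*R) * (C * (2*a*R^2)) := by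
          rw [setIntegral_const, smul_eq_mul, Real.volume_real_Icc_of_le (by linarith)]
          ring_nf
  have hNinle : (∫ x in Icc (-R) R, V x * ‖u x‖^2) ≤ -c + (2*R) * (C * (2*a*R^2)) := by
    have h := (abs_le.1 hbound).2
    rw [← hdiff] at h
    rw [hIccV] at h
    linarith
  have haR : (2*R) * (C * (2*a*R^2)) ≤ c/2 := by
    have had : a * (8*R^3*(C+1)) ≤ c := (le_div_iff₀ (by positivity)).1 ha1
    nlinarith [mul_nonneg (mul_nonneg ha.le (by positivity : (0:ℝ) ≤ 8*R^3)) hC0,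
      mul_nonneg ha.le (by positivity : (0:ℝ) ≤ 8*R^3)]
  have hN2 : N ≤ -c/2 := by
    rw [← hsplit]
    linarith
  -- choose β
  set β : ℝ := (c/(8*M)) / Ju with hβdef
  have hβ : 0 < β := by positivity
  have hβJu : β * Ju = c/(8*M) := div_mul_cancel₀ _ hJupos.ne'
  set D : ℝ := (eLpNorm u' 2 (volume : Measure ℝ)).toReal ^ 2 +
      β * (eLpNorm u 2 (volume : Measure ℝ)).toReal ^ 2 with hDdef
  have hDeq : D = Ku + β * Ju := by rw [hDdef, hequ, hequ']
  have hDpos : 0 < D := by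
    rw [hDeq]
    have : 0 < β * Ju := mul_pos hβ hJupos
    linarith
  have hDle : D ≤ c/(4*M) := by
    rw [hDeq, hβJu]
    have : c/(8*M) + c/(8*M) = c/(4*M) := by ring
    linarith
  -- the rayleigh quotient is < -M
  have hr : rayleigh V β u u' < -M := by
    rw [rayleigh, ← hNdef, ← hDdef, div_lt_iff₀ hDpos]
    have h1 : M * D ≤ M * (c/(4*M)) := mul_le_mul_of_nonneg_left hDle hM.le
    have h2 : M * (c/(4*M)) = c/4 := by field_simp
    nlinarith
  -- lower bound for the whole set
  set S : Set ℝ := { r : ℝ | ∃ w w' : ℝ → ℂ, MemH1 w w' ∧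
      ¬ w =ᵐ[(volume : Measure ℝ)] (0 : ℝ → ℂ) ∧ r = rayleigh V β w w' } with hSdef
  have hlb : ∀ r ∈ S, -(C/β) ≤ r := by
    rintro r ⟨w, w', ⟨hw2, hw'2, _⟩, hwne, rfl⟩
    set J : ℝ := ∫ x : ℝ, ‖w x‖^2 with hJdef
    have hJpos : 0 < J := integral_sq_norm_pos hw2 hwne
    have hwint : Integrable (fun x => ‖w x‖^2) (volume : Measure ℝ) :=
      (memLp_two_iff_integrable_sq_norm hw2.aestronglyMeasurable).1 hw2
    have hNwint : Integrable (fun x => V x * ‖w x‖^2) (volume : Measure ℝ) :=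
      integrable_V_mul_sq hVm hCae hw2
    have hNw : -(C*J) ≤ ∫ x : ℝ, V x * ‖w x‖^2 := by
      have h1 : (∫ x : ℝ, -(C * ‖w x‖^2)) ≤ ∫ x : ℝ, V x * ‖w x‖^2 := by
        apply integral_mono_ae (f := fun x => -(C * ‖w x‖^2))
          ((hwint.const_mul C).neg) hNwint
        filter_upwards [hCae] with x hx
        have h0 : (0:ℝ) ≤ ‖w x‖ ^ 2 := by positivity
        have := (abs_le.1 hx).1
        nlinarith
      rw [integral_neg, MeasureTheory.integral_const_mul] at h1
      exact h1
    have hwsq : (eLpNorm w 2 (volume : Measure ℝ)).toReal ^ 2 = J := sq_toReal_eLpNorm_two hw2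
    set Dw : ℝ := (eLpNorm w' 2 (volume : Measure ℝ)).toReal ^ 2 +
        β * (eLpNorm w 2 (volume : Measure ℝ)).toReal ^ 2 with hDwdef
    have hDwge : β * J ≤ Dw := by
      rw [hDwdef, hwsq]
      nlinarith [sq_nonneg (eLpNorm w' 2 (volume : Measure ℝ)).toReal]
    have hDwpos : 0 < Dw := lt_of_lt_of_le (mul_pos hβ hJpos) hDwge
    rw [rayleigh, ← hDwdef]
    rw [le_div_iff₀ hDwpos]
    have hk : -(C/β) ≤ 0 := neg_nonpos.2 (by positivity)
    have h2 : -(C/β) * Dw ≤ -(C/β) * (β * J) := by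
      apply mul_le_mul_of_nonpos_left hDwge hk
    have h3 : -(C/β) * (β * J) = -(C*J) := by
      field_simp
    linarith
  have hmem : rayleigh V β u u' ∈ S := ⟨u, u', hmemH1, hne, rfl⟩
  refine ⟨β, hβ, ?_⟩
  have hsInf : muOne V β ≤ rayleigh V β u u' := by
    rw [muOne]
    exact csInf_le ⟨-(C/β), fun r hr => hlb r hr⟩ hmem
  linarith
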